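/- arXiv:2605.00811 — 2 statements merged into one kernel-verified Lean document; each statement's English description precedes it below -/
import Mathlib

section
/- Duality with a repeated e_{AD}-free reduction at A=0, B=C=∞, D=1: for a word w = w_1 e_{AD} w_2 in the letters {e_{AB}, e_{AC}, e_{AD}, e_{BC}, e_{BD}, e_{CD}} with w admissible, define f(w) := I_q(0; [u_1^{(1)}, v_1^{(1)}], …, [u_k^{(k)}, v_k^{(k)}]; 1) ∈ ℚ[[q]] where A^{(j)} = 0, B^{(j)} = C^{(j)} = ∞ (a factor t/(t−∞) is interpreted as 0, i.e., the bracket [u,∞] contributes t/(t−u)), and D^{(j)} = q^{−#{h ≥ j : u_h v_h ∈ {AB, AC, BC}}}. Then f(w_1 e_{AD} w_2) = f(w_1 e_{AB} w_2) + f(w_1 e_{BD} w_2) + f(w_1 w_2). -/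
/- We endow `ℚ[[q]]` with the product topology (coefficientwise convergence), so that
the `q`-adically convergent sums of the paper become honest `tsum`s. -/
noncomputable instance : TopologicalSpace (PowerSeries ℚ) :=
  inferInstanceAs (TopologicalSpace ((Unit →₀ ℕ) → ℚ))

instance : T2Space (PowerSeries ℚ) :=
  inferInstanceAs (T2Space ((Unit →₀ ℕ) → ℚ))

/-- The six formal letters `e_{AB}, e_{AC}, e_{AD}, e_{BC}, e_{BD}, e_{CD}`. -/
inductive Letter : Type
  | AB | AC | AD | BC | BD | CD
  deriving DecidableEq

/-- A word is admissible if it does not begin with a letter `e_{Av}` and does not end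
with a letter `e_{uD}`. -/
def AdmissibleWord (w : List Letter) : Prop :=
  (∀ u ∈ w.head?, u ∉ [Letter.AB, Letter.AC, Letter.AD]) ∧
  (∀ u ∈ w.getLast?, u ∉ [Letter.AD, Letter.BD, Letter.CD])

/-- Whether a letter lies in `{AB, AC, BC}` (these are the letters contributing to the
shift of `D`). -/
def Letter.isUpper : Letter → Bool
  | .AB => true | .AC => true | .BC => true | _ => false

/-- `#{h ≥ j : u_h ∈ {AB, AC, BC}}` (0-indexed, `h ≥ j` inclusive), so that
`D^{(j)} = q^{−dsh w j}`. -/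
def dsh (w : List Letter) (j : ℕ) : ℕ := ((w.drop j).countP Letter.isUpper)

/-- The factor of the iterated `q`-integral at specialization `A = 0`, `B = C = ∞`,
`D^{(j)} = q^{−c}`, for chain point `t = q^m` and `e = m + c`: with the conventions
`t/(t−0) = 1` and `t/(t−∞) = 0`, the bracket `[u,v]` contributes
`t/(t−u) − t/(t−v)`, namely `1` for `e_{AB}, e_{AC}`, `0` for `e_{BC}`,
`1 + q^e(1−q^e)^{−1}` for `e_{AD}`, and `q^e(1−q^e)^{−1}` for `e_{BD}, e_{CD}`. -/
noncomputable def lfactor : Letter → ℕ → PowerSeries ℚ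
  | .AB => fun _ => 1
  | .AC => fun _ => 1
  | .BC => fun _ => 0
  | .AD => fun e => 1 + (PowerSeries.X : PowerSeries ℚ) ^ e
      * Ring.inverse (1 - (PowerSeries.X : PowerSeries ℚ) ^ e)
  | .BD => fun e => (PowerSeries.X : PowerSeries ℚ) ^ e
      * Ring.inverse (1 - (PowerSeries.X : PowerSeries ℚ) ^ e)
  | .CD => fun e => (PowerSeries.X : PowerSeries ℚ) ^ e
      * Ring.inverse (1 - (PowerSeries.X : PowerSeries ℚ) ^ e)

/-- `f(w) = I_q(0; [u_1^{(1)},v_1^{(1)}],…,[u_k^{(k)},v_k^{(k)}]; 1) ∈ ℚ[[q]]` at the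
specialization `A = 0`, `B = C = ∞`, `D = 1`: the sum over chains
`t_1 ⊴ ⋯ ⊴ t_k ⊴ 1` in `{q^m : m ≥ 0}` (i.e. `t_j = q^{m_j}` with
`m_1 ≥ ⋯ ≥ m_k ≥ 0`) of the product of the factors above. -/
noncomputable def fword (w : List Letter) : PowerSeries ℚ :=
  ∑' m : {m : Fin w.length → ℕ // Antitone m},
    ∏ j : Fin w.length, lfactor (w.get j) (m.1 j + dsh w (j : ℕ))

/-! Put `p = |w₁|`. The factor of `e_{AD}` is `1 +` that of `e_{BD}`, so
`f(w₁ e_{AD} w₂) = f(w₁ e_{BD} w₂) + S`, where `S` is the chain sum with the factor at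
position `p` replaced by `1`. Split the chains of `S` by whether `m_{p+1} < m_p` or
`m_{p+1} = m_p`. Lowering `m_0, …, m_p` by one identifies the first kind with the chains of
`w₁ e_{AB} w₂`: the letter `e_{AB}` has factor `1` and raises the exponent shift of `D^{(j)}`
by one exactly for `j ≤ p`. Chains of the second kind are the chains of `w₁ w₂` with the point
`t_p` doubled. Admissibility makes `w₁` and `w₂` nonempty, and the first letter of `w₁`
supplies the factor `q^{m_0}` that makes every sum converge `q`-adically. -/

open PowerSeries

instance : ContinuousAdd ℚ⟦X⟧ :=
  inferInstanceAs (ContinuousAdd ((Unit →₀ ℕ) → ℚ))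

abbrev AntitoneTuple (k : ℕ) := {m : Fin k → ℕ // Antitone m}

/-- Positions are indexed by `ℕ`, so that the factor family of a word does not depend on a
proof about its length; positions `≥ k` are ignored. -/
noncomputable def chainSum (k : ℕ) (F : ℕ → ℕ → ℚ⟦X⟧) : ℚ⟦X⟧ :=
  ∑' m : AntitoneTuple k, ∏ j : Fin k, F j (m.1 j)

lemma summable_of_X_pow_dvd {ι : Type*} (g : ι → ℕ) (hg : ∀ N, {i | g i ≤ N}.Finite)
    (F : ι → ℚ⟦X⟧) (hF : ∀ i, X ^ g i ∣ F i) : Summable F := by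
  refine Pi.summable.mpr fun d =>
    summable_of_hasFiniteSupport ((hg (d ())).subset fun i hi => ?_)
  by_contra hlt
  have hd : d = Finsupp.single () (d ()) := Finsupp.ext fun u => by simp
  exact hi (hd ▸ X_pow_dvd_iff.mp (hF i) (d ()) (not_le.mp hlt))

lemma finite_setOf_antitoneTuple_le {k : ℕ} (hk : 0 < k) (N : ℕ) :
    {m : AntitoneTuple k | m.1 ⟨0, hk⟩ ≤ N}.Finite := by
  refine ((Set.Finite.pi fun _ => Set.finite_Iic N).preimage
    Subtype.val_injective.injOn).subset fun m hm j _ => ?_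
  exact (m.2 (show (⟨0, hk⟩ : Fin k) ≤ j from Nat.zero_le _)).trans hm

lemma summable_prod_comp_antitoneTuple {k : ℕ} (hk : 0 < k) {F : ℕ → ℕ → ℚ⟦X⟧}
    (hF : ∀ e, X ^ e ∣ F 0 e) {ι : Type*} {e : ι → AntitoneTuple k}
    (he : Function.Injective e) : Summable fun i => ∏ j : Fin k, F j ((e i).1 j) :=
  summable_of_X_pow_dvd (fun i => (e i).1 ⟨0, hk⟩)
    (fun N => (finite_setOf_antitoneTuple_le hk N).preimage he.injOn) _
    fun _ => (hF _).trans (Finset.dvd_prod_of_mem _ (Finset.mem_univ (⟨0, hk⟩ : Fin k)))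

lemma val_succAbove_castSucc {k : ℕ} (p i : Fin k) :
    (p.castSucc.succAbove i : ℕ) = if (i : ℕ) < p then (i : ℕ) else i + 1 := by
  rcases lt_or_ge i p with h | h
  · rw [Fin.succAbove_castSucc_of_lt _ _ h, if_pos (Fin.lt_def.mp h), Fin.val_castSucc]
  · rw [Fin.succAbove_castSucc_of_le _ _ h, if_neg (not_lt.mpr (Fin.le_def.mp h)), Fin.val_succ]

section Split

variable {k : ℕ} (p : Fin k)

def strictAt : Set (AntitoneTuple (k + 1)) := {m | m.1 p.succ < m.1 p.castSucc}

def shiftEquiv : AntitoneTuple (k + 1) ≃ strictAt p where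
  toFun m := ⟨⟨fun j => m.1 j + if (j : ℕ) ≤ p then 1 else 0, fun i j hij => by
      have := m.2 hij
      have : (i : ℕ) ≤ j := hij
      dsimp only
      split_ifs <;> omega⟩, by
    have := m.2 (Fin.castSucc_le_succ p)
    simp only [strictAt, Set.mem_ofPred_eq, Fin.val_succ, Fin.val_castSucc]
    split_ifs <;> omega⟩
  invFun m := ⟨fun j => m.1.1 j - if (j : ℕ) ≤ p then 1 else 0, fun i j hij => by
    have hlt : m.1.1 p.succ < m.1.1 p.castSucc := m.2
    have := m.1.2 hij
    have : (i : ℕ) ≤ j := hij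
    dsimp only
    split_ifs with hj hi hi
    · omega
    · omega
    · have := m.1.2 (Fin.le_def.mpr (by rw [Fin.val_succ]; omega) : p.succ ≤ j)
      have := m.1.2 (Fin.le_def.mpr (by rw [Fin.val_castSucc]; omega) : i ≤ p.castSucc)
      omega
    · omega⟩
  left_inv m := by
    ext j
    simp
  right_inv m := by
    ext j
    have hlt : m.1.1 p.succ < m.1.1 p.castSucc := m.2
    simp only
    split_ifs with hj
    · have := m.1.2 (Fin.le_def.mpr (by rw [Fin.val_castSucc]; omega) : j ≤ p.castSucc)
      omega
    · omega

def collapseEquiv : AntitoneTuple k ≃ ↥(strictAt p)ᶜ where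
  toFun n := ⟨⟨n.1 ∘ p.predAbove, n.2.comp_monotone p.predAbove_right_monotone⟩, by
    simp [strictAt]⟩
  invFun m := ⟨m.1.1 ∘ p.castSucc.succAbove,
    m.1.2.comp_monotone (Fin.strictMono_succAbove _).monotone⟩
  left_inv n := by
    ext i
    simp [Fin.predAbove_succAbove]
  right_inv m := by
    ext j
    by_cases hj : j = p.castSucc
    · have hle : m.1.1 p.succ ≤ m.1.1 p.castSucc := m.1.2 (Fin.castSucc_le_succ p)
      have hge : ¬ m.1.1 p.succ < m.1.1 p.castSucc := m.2
      subst hj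
      simp only [Function.comp_apply, Fin.predAbove_castSucc_self, Fin.succAbove_castSucc_self]
      omega
    · simp [Fin.succAbove_predAbove hj]

theorem chainSum_eq_shift_add_collapse {H : ℕ → ℕ → ℚ⟦X⟧}
    (hH0 : ∀ e, X ^ e ∣ H 0 e) (hHp : H p = 1) :
    chainSum (k + 1) H =
      chainSum (k + 1) (fun j e => H j (e + if j ≤ p then 1 else 0)) +
        chainSum k (fun i => H (if i < p then i else i + 1)) := by
  set R : AntitoneTuple (k + 1) → ℚ⟦X⟧ := fun m => ∏ j : Fin (k + 1), H j (m.1 j)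
  have hsum (s : Set (AntitoneTuple (k + 1))) : Summable (R ∘ Subtype.val : s → ℚ⟦X⟧) :=
    summable_prod_comp_antitoneTuple k.succ_pos hH0 Subtype.val_injective
  have hstrict : ∑' m : strictAt p, R m =
      chainSum (k + 1) (fun j e => H j (e + if j ≤ p then 1 else 0)) :=
    ((shiftEquiv p).tsum_eq (R ∘ Subtype.val)).symm
  have hequal : ∑' m : ↥(strictAt p)ᶜ, R m =
      chainSum k (fun i => H (if i < p then i else i + 1)) := by
    rw [← (collapseEquiv p).tsum_eq fun m => R m]
    refine tsum_congr fun n => ?_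
    simp only [Function.comp_apply, R, collapseEquiv, Equiv.coe_fn_mk]
    rw [Fin.prod_univ_succAbove _ p.castSucc, Fin.val_castSucc, Fin.predAbove_castSucc_self,
      hHp, Pi.one_apply, one_mul]
    simp only [Fin.predAbove_succAbove, val_succAbove_castSucc]
  rw [← hstrict, ← hequal, Summable.tsum_add_tsum_compl (hsum _) (hsum _)]
  rfl

end Split

theorem chainSum_add_eq_of_add_eq {k p : ℕ} (hp : p < k) {F G G' : ℕ → ℕ → ℚ⟦X⟧}
    (hG0 : ∀ e, X ^ e ∣ G 0 e) (hG'0 : ∀ e, X ^ e ∣ G' 0 e)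
    (hp_eq : ∀ e, G p e + G' p e = F p e) (hG : ∀ j ≠ p, G j = F j)
    (hG' : ∀ j ≠ p, G' j = F j) :
    chainSum k G + chainSum k G' = chainSum k F := by
  have hk : 0 < k := by omega
  have hsum : ∀ {F' : ℕ → ℕ → ℚ⟦X⟧}, (∀ e, X ^ e ∣ F' 0 e) →
      Summable fun m : AntitoneTuple k => ∏ j : Fin k, F' j (m.1 j) :=
    fun h => summable_prod_comp_antitoneTuple hk h Function.injective_id
  rw [chainSum, chainSum, chainSum, ← (hsum hG0).tsum_add (hsum hG'0)]
  refine tsum_congr fun m => Finset.prod_add_prod_eq (Finset.mem_univ ⟨p, hp⟩) (hp_eq _)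
    (fun j _ hj => ?_) (fun j _ hj => ?_)
  · rw [hG j fun h => hj (Fin.ext h)]
  · rw [hG' j fun h => hj (Fin.ext h)]

-- Out-of-range positions read as `e_{BC}`, whose factor is `0`.
noncomputable def wordFactor (w : List Letter) (j e : ℕ) : ℚ⟦X⟧ :=
  lfactor (w.getD j .BC) (e + dsh w j)

lemma fword_eq_chainSum (w : List Letter) : fword w = chainSum w.length (wordFactor w) := by
  simp [fword, chainSum, wordFactor]

lemma X_pow_dvd_lfactor {L : Letter} (hL : L ∉ [Letter.AB, Letter.AC, Letter.AD]) (e : ℕ) :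
    X ^ e ∣ lfactor L e := by
  cases L <;> simp_all [lfactor]

lemma X_pow_dvd_wordFactor_zero {w : List Letter}
    (hw : ∀ u ∈ w.head?, u ∉ [Letter.AB, Letter.AC, Letter.AD]) (e : ℕ) :
    X ^ e ∣ wordFactor w 0 e := by
  cases w with
  | nil => exact dvd_zero _
  | cons u w =>
    exact (pow_dvd_pow X (Nat.le_add_right e _)).trans (X_pow_dvd_lfactor (hw u rfl) _)

section Insert

variable (w1 w2 : List Letter) (x : Letter)

lemma dsh_append_cons_of_le {j : ℕ} (h : j ≤ w1.length) :
    dsh (w1 ++ x :: w2) j = dsh (w1 ++ w2) j + if x.isUpper then 1 else 0 := by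
  simp only [dsh, List.drop_append, Nat.sub_eq_zero_of_le h, List.drop_zero, List.countP_append,
    List.countP_cons]
  ring

lemma dsh_append_cons_succ (i : ℕ) :
    dsh (w1 ++ x :: w2) (w1.length + i + 1) = dsh (w1 ++ w2) (w1.length + i) := by
  have h1 : w1.length ≤ w1.length + (i + 1) := by omega
  have h2 : w1.length ≤ w1.length + i := by omega
  simp only [dsh, Nat.add_assoc, List.drop_append, List.drop_eq_nil_of_le h1,
    List.drop_eq_nil_of_le h2, List.nil_append, Nat.add_sub_cancel_left, List.drop_succ_cons]

lemma wordFactor_append_cons_of_lt {j : ℕ} (h : j < w1.length) (e : ℕ) :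
    wordFactor (w1 ++ x :: w2) j e =
      wordFactor (w1 ++ w2) j (e + if x.isUpper then 1 else 0) := by
  rw [wordFactor, wordFactor, List.getD_append _ _ _ _ h, List.getD_append _ _ _ _ h,
    dsh_append_cons_of_le _ _ _ h.le]
  ring_nf

lemma wordFactor_append_cons_self (e : ℕ) :
    wordFactor (w1 ++ x :: w2) w1.length e =
      lfactor x (e + dsh (w1 ++ w2) w1.length + if x.isUpper then 1 else 0) := by
  rw [wordFactor, List.getD_append_right _ _ _ _ le_rfl, dsh_append_cons_of_le _ _ _ le_rfl]
  simp [Nat.add_assoc]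

lemma wordFactor_append_cons_succ (i : ℕ) :
    wordFactor (w1 ++ x :: w2) (w1.length + i + 1) =
      wordFactor (w1 ++ w2) (w1.length + i) := by
  funext e
  rw [wordFactor, wordFactor, dsh_append_cons_succ, List.getD_append_right _ _ _ _ (by omega),
    List.getD_append_right _ _ _ _ (by omega)]
  simp [Nat.add_assoc]

lemma fword_append_cons :
    fword (w1 ++ x :: w2) =
      chainSum (w1.length + w2.length + 1) (wordFactor (w1 ++ x :: w2)) := by
  rw [fword_eq_chainSum, List.length_append, List.length_cons, Nat.add_assoc]

lemma fword_append :
    fword (w1 ++ w2) = chainSum (w1.length + w2.length) (wordFactor (w1 ++ w2)) := by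
  rw [fword_eq_chainSum, List.length_append]

lemma wordFactor_append_cons_congr {y : Letter} (hxy : x.isUpper = y.isUpper) {j : ℕ}
    (hj : j ≠ w1.length) : wordFactor (w1 ++ x :: w2) j = wordFactor (w1 ++ y :: w2) j := by
  rcases lt_or_gt_of_ne hj with h | h
  · funext e
    rw [wordFactor_append_cons_of_lt _ _ _ h, wordFactor_append_cons_of_lt _ _ _ h, hxy]
  · obtain ⟨i, rfl⟩ : ∃ i, j = w1.length + i + 1 := ⟨j - w1.length - 1, by omega⟩
    rw [wordFactor_append_cons_succ, wordFactor_append_cons_succ]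

lemma wordFactor_append_AB_eq_shift :
    wordFactor (w1 ++ Letter.AB :: w2) = fun j e =>
      Function.update (wordFactor (w1 ++ Letter.AD :: w2)) w1.length 1 j
        (e + if j ≤ w1.length then 1 else 0) := by
  funext j e
  rcases lt_trichotomy j w1.length with h | rfl | h
  · rw [Function.update_of_ne h.ne, if_pos h.le, wordFactor_append_cons_of_lt _ _ _ h,
      wordFactor_append_cons_of_lt _ _ _ h]
    rfl
  · rw [Function.update_self, wordFactor_append_cons_self]
    rfl
  · obtain ⟨i, rfl⟩ : ∃ i, j = w1.length + i + 1 := ⟨j - w1.length - 1, by omega⟩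
    rw [Function.update_of_ne h.ne', if_neg (by omega), wordFactor_append_cons_succ,
      wordFactor_append_cons_succ]
    rfl

lemma wordFactor_append_eq_collapse :
    wordFactor (w1 ++ w2) = fun i =>
      Function.update (wordFactor (w1 ++ Letter.AD :: w2)) w1.length 1
        (if i < w1.length then i else i + 1) := by
  funext i
  rcases lt_or_ge i w1.length with h | h
  · funext e
    rw [if_pos h, Function.update_of_ne h.ne, wordFactor_append_cons_of_lt _ _ _ h]
    rfl
  · obtain ⟨c, rfl⟩ : ∃ c, i = w1.length + c := ⟨i - w1.length, by omega⟩
    rw [if_neg (by omega), Function.update_of_ne (by omega), wordFactor_append_cons_succ]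

end Insert

lemma AdmissibleWord.append_cons_AD {w1 w2 : List Letter}
    (h : AdmissibleWord (w1 ++ Letter.AD :: w2)) :
    0 < w1.length ∧ 0 < w2.length ∧
      ∀ u ∈ (w1 ++ w2).head?, u ∉ [Letter.AB, Letter.AC, Letter.AD] := by
  obtain ⟨hhead, hlast⟩ := h
  have hw1 : w1 ≠ [] := by rintro rfl; exact hhead _ rfl (by simp)
  have hw2 : w2 ≠ [] := by rintro rfl; exact hlast Letter.AD (by simp) (by simp)
  obtain ⟨a, w1, rfl⟩ := List.exists_cons_of_ne_nil hw1
  exact ⟨List.length_pos_iff.mpr hw1, List.length_pos_iff.mpr hw2, fun u hu => hhead u hu⟩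

/-- **Lemma 4.6 of the paper**: for an admissible word `w = w_1 e_{AD} w_2`,
`f(w_1 e_{AD} w_2) = f(w_1 e_{AB} w_2) + f(w_1 e_{BD} w_2) + f(w_1 w_2)`. -/
theorem fword_erase_AD (w1 w2 : List Letter)
    (hadm : AdmissibleWord (w1 ++ Letter.AD :: w2)) :
    fword (w1 ++ Letter.AD :: w2)
      = fword (w1 ++ Letter.AB :: w2) + fword (w1 ++ Letter.BD :: w2)
        + fword (w1 ++ w2) := by
  obtain ⟨hw1, hw2, hhead⟩ := hadm.append_cons_AD
  set H := Function.update (wordFactor (w1 ++ Letter.AD :: w2)) w1.length 1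
  have hdvd (x : Letter) (e : ℕ) : X ^ e ∣ wordFactor (w1 ++ x :: w2) 0 e := by
    rw [wordFactor_append_cons_of_lt _ _ _ hw1]
    exact (pow_dvd_pow X (Nat.le_add_right _ _)).trans (X_pow_dvd_wordFactor_zero hhead _)
  have hH0 (e : ℕ) : X ^ e ∣ H 0 e := by
    simpa only [H, Function.update_of_ne hw1.ne] using hdvd .AD e
  have hAD := chainSum_add_eq_of_add_eq (k := w1.length + w2.length + 1) (by omega)
    hH0 (hdvd .BD)
    (fun e => by
      simp only [H, Function.update_self, wordFactor_append_cons_self]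
      rfl)
    (fun j hj => Function.update_of_ne hj _ _)
    (fun j hj => wordFactor_append_cons_congr w1 w2 Letter.BD (y := Letter.AD) rfl hj)
  have hsplit := chainSum_eq_shift_add_collapse
    (⟨w1.length, by omega⟩ : Fin (w1.length + w2.length)) hH0 (Function.update_self _ _ _)
  rw [← wordFactor_append_AB_eq_shift, ← wordFactor_append_eq_collapse] at hsplit
  rw [fword_append_cons, fword_append_cons, fword_append_cons, fword_append, ← hAD, hsplit]
  abel
end

section
/- The case AD = BC·q^{m(w)}: let w = e_{u_1v_1}⋯e_{u_kv_k} be an admissible word and m(w) := 1 + #{h : u_h v_h ≠ AD}. In the field of fractions of ℚ[A,B,C,D,q]/(A − q^N D) (for fixed N ≥ 0), under the additional specialization AD = BC·q^{m(w)}, the q-shifted parameters satisfy AD/τ(u_j)^{[j]} = u_j^{(j)} and AD/τ(v_j)^{[j]} = v_j^{(j)} for all 1 ≤ j ≤ k, where u^{(j)} are the shifts A^{(j)} = Aq^{#{h≤j: u_hv_h∈{BC,BD,CD}}}, B^{(j)} = Bq^{#{h≤j: u_hv_h∉{AC,AD}} + #{h≥j: u_hv_h=CD}}, C^{(j)} =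 Cq^{#{h≤j: u_hv_h∉{AB,AD}} + #{h≥j: u_hv_h=BD}}, D^{(j)} = Dq^{−#{h≥j: u_hv_h∈{AB,AC,BC}}}, and the bracketed shifts are A^{[j]} = Aq^{#{h≥j: u_hv_h∈{AB,AC,BC}}}, B^{[j]} = Bq^{#{h≥j: u_hv_h∉{AD,BD}} + #{h≤j: u_hv_h=AB}}, C^{[j]} = Cq^{#{h≥j: u_hv_h∉{AD,CD}} + #{h≤j: u_hv_h=AC}}, D^{[j]} = Dq^{−#{h≤j: u_hv_h∈{BC,BD,CD}}}. Consequently L_q(w) = L_q(τ(w)). -/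
/-- The four marked points, as formal symbols. -/
inductive Pt : Type
  | A | B | C | D
  deriving DecidableEq

/-- First coordinate of a letter. -/
def Letter.p1 : Letter → Pt
  | .AB => .A | .AC => .A | .AD => .A | .BC => .B | .BD => .B | .CD => .C

/-- Second coordinate of a letter. -/
def Letter.p2 : Letter → Pt
  | .AB => .B | .AC => .C | .AD => .D | .BC => .C | .BD => .D | .CD => .D

/-- The involution `σ = (A D)(B C)`. -/
def Pt.sigma : Pt → Pt
  | .A => .D | .B => .C | .C => .B | .D => .A

/-- The letter `e_{σ(v)σ(u)}` obtained from `e_{uv}`. -/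
def Letter.dual : Letter → Letter
  | .AB => .CD | .AC => .BD | .AD => .AD | .BC => .BC | .BD => .AC | .CD => .AB

/-- The anti-automorphism `τ` on words: reverse the word and dualize each letter. -/
def tauWord (w : List Letter) : List Letter := (w.map Letter.dual).reverse

/-- `m(w) = 1 + #{h : u_h v_h ≠ AD}`. -/
def mval (w : List Letter) : ℕ := 1 + w.countP (fun u => !(u == Letter.AD))

section

variable {K : Type*} [Field K] (A B C D q : K)

/-- The `q`-shifted parameter `p^{(j)}` (`j` is 1-based, `1 ≤ j ≤ k`):
`A^{(j)} = A q^{#{h≤j : u_h∈{BC,BD,CD}}}`,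
`B^{(j)} = B q^{#{h≤j : u_h∉{AC,AD}} + #{h≥j : u_h=CD}}`,
`C^{(j)} = C q^{#{h≤j : u_h∉{AB,AD}} + #{h≥j : u_h=BD}}`,
`D^{(j)} = D q^{−#{h≥j : u_h∈{AB,AC,BC}}}`. -/
def pshift (w : List Letter) (j : ℕ) : Pt → K
  | .A => A * q ^ ((w.take j).countP
      (fun u => u == Letter.BC || u == Letter.BD || u == Letter.CD))
  | .B => B * q ^ ((w.take j).countP (fun u => !(u == Letter.AC || u == Letter.AD))
      + (w.drop (j - 1)).countP (fun u => u == Letter.CD))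
  | .C => C * q ^ ((w.take j).countP (fun u => !(u == Letter.AB || u == Letter.AD))
      + (w.drop (j - 1)).countP (fun u => u == Letter.BD))
  | .D => D * q ^ (-(((w.drop (j - 1)).countP
      (fun u => u == Letter.AB || u == Letter.AC || u == Letter.BC) : ℕ) : ℤ))

/-- The bracketed `q`-shifted parameter `p^{[j]}` (`j` is 1-based):
`A^{[j]} = A q^{#{h≥j : u_h∈{AB,AC,BC}}}`,
`B^{[j]} = B q^{#{h≥j : u_h∉{AD,BD}} + #{h≤j : u_h=AB}}`,
`C^{[j]} = C q^{#{h≥j : u_h∉{AD,CD}} + #{h≤j : u_h=AC}}`,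
`D^{[j]} = D q^{−#{h≤j : u_h∈{BC,BD,CD}}}`. -/
def bshift (w : List Letter) (j : ℕ) : Pt → K
  | .A => A * q ^ ((w.drop (j - 1)).countP
      (fun u => u == Letter.AB || u == Letter.AC || u == Letter.BC))
  | .B => B * q ^ ((w.drop (j - 1)).countP
        (fun u => !(u == Letter.AD || u == Letter.BD))
      + (w.take j).countP (fun u => u == Letter.AB))
  | .C => C * q ^ ((w.drop (j - 1)).countP
        (fun u => !(u == Letter.AD || u == Letter.CD))
      + (w.take j).countP (fun u => u == Letter.AC))
  | .D => D * q ^ (-(((w.take j).countP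
      (fun u => u == Letter.BC || u == Letter.BD || u == Letter.CD) : ℕ) : ℤ))

/-- `L_q(w) = I_q(A; [u_1^{(1)},v_1^{(1)}],…,[u_k^{(k)},v_k^{(k)}]; D)`: the sum over
chains `A ⊴ t_1 ⊴ ⋯ ⊴ t_k ⊴ D` (with `A = q^N D`, i.e. `t_j = A q^{-n_j}`,
`0 ≤ n_1 ≤ ⋯ ≤ n_k ≤ N`) of
`∏_j (t_j/(t_j − u_j^{(j)}) − t_j/(t_j − v_j^{(j)}))`. -/
noncomputable def LqW (N : ℕ) (w : List Letter) : K :=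
  ∑ n ∈ Finset.univ.filter (fun n : Fin w.length → Fin (N + 1) =>
      ∀ i j : Fin w.length, i ≤ j → n i ≤ n j),
    ∏ j : Fin w.length,
      (A * q ^ (-((n j : ℕ) : ℤ))
          / (A * q ^ (-((n j : ℕ) : ℤ)) - pshift A B C D q w ((j : ℕ) + 1) (w.get j).p1)
        - A * q ^ (-((n j : ℕ) : ℤ))
          / (A * q ^ (-((n j : ℕ) : ℤ)) - pshift A B C D q w ((j : ℕ) + 1) (w.get j).p2))

end

/-!
For every position `j`, the parameter `p^{(j)}` and the bracketed parameter `σ(p)^{[j]}` multiply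
to `AD`: for `p = A, D` the powers of `q` cancel, and for `p = B, C` the two exponents add up to
`#{h ≤ j : u_h ≠ AD} + #{h ≥ j : u_h ≠ AD} = m(w)`, the letter `u_j ≠ AD` being counted twice.
Reversing and dualising the word turns the `(j)`-shifts of `τ(w)` into the `[k + 1 - j]`-shifts of
`w`, so the parameters of `L_q(τ(w))` are `AD / v_{k+1-j}^{(k+1-j)}` and `AD / u_{k+1-j}^{(k+1-j)}`.
Since `A = q^N D`, the inversion `t ↦ AD / t` reverses the chains `A ⊴ t_1 ⊴ ⋯ ⊴ t_k ⊴ D`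
(`A q^{-n} ↦ A q^{-(N - n)}`) and preserves each factor `t/(t - u) - t/(t - v)`, which identifies
`L_q(w)` with `L_q(τ(w))` term by term.
-/

theorem List.countP_add_countP_of_toNat {α : Type*} {p q r : α → Bool}
    (h : ∀ a, (p a).toNat + (q a).toNat = (r a).toNat) :
    ∀ l : List α, l.countP p + l.countP q = l.countP r
  | [] => rfl
  | a :: l => by
    have ha := h a
    have ih := List.countP_add_countP_of_toNat h l
    simp only [List.countP_cons]
    revert ha
    cases p a <;> cases q a <;> cases r a <;> simp <;> omega

theorem List.countP_take_succ_add_countP_drop {α : Type*} (p : α → Bool) {l : List α} {j : ℕ}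
    (hj : j < l.length) :
    (l.take (j + 1)).countP p + (l.drop j).countP p = l.countP p + (p l[j]).toNat := by
  have h := congrArg (List.countP p) (List.take_append_drop (j + 1) l)
  rw [List.countP_append] at h
  rw [← h, List.drop_eq_getElem_cons hj, List.countP_cons]
  cases p l[j] <;> simp [Nat.add_assoc]

section

variable {K : Type*} [Field K] {A B C D q : K}

theorem pshift_mul_bshift_sigma (hq : q ≠ 0) {w : List Letter} (hm : A * D = B * C * q ^ mval w)
    (j : Fin w.length) {p : Pt} (hp : w.get j = .AD → p = .A ∨ p = .D) :
    pshift A B C D q w (j + 1) p * bshift A B C D q w (j + 1) p.sigma = A * D := by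
  obtain ⟨j, hj⟩ := j
  simp only [List.get_eq_getElem] at hp ⊢
  have hsplit (p p' : Letter → Bool) (l : List Letter)
      (h : ∀ u, (p u).toNat + (p' u).toNat = (!(u == Letter.AD)).toNat) :
      l.countP p + l.countP p' = l.countP (fun u => !(u == Letter.AD)) :=
    List.countP_add_countP_of_toNat h l
  have hmval (hAD : w[j] ≠ .AD) : (w.take (j + 1)).countP (fun u => !(u == Letter.AD))
      + (w.drop j).countP (fun u => !(u == Letter.AD)) = mval w := by
    have := List.countP_take_succ_add_countP_drop (fun u => !(u == Letter.AD)) hj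
    simp only [beq_false_of_ne hAD, Bool.not_false, Bool.toNat_true] at this
    unfold mval
    omega
  cases p with
  | A | D =>
    simp only [pshift, bshift, Pt.sigma, Nat.add_sub_cancel, zpow_neg, zpow_natCast]
    field_simp
  | B =>
    have := hmval fun h => by simpa using hp h
    have := hsplit (fun u => !(u == .AC || u == .AD)) (· == .AC) (w.take (j + 1))
      (by intro u; cases u <;> rfl)
    have := hsplit (fun u => !(u == .AD || u == .CD)) (· == .CD) (w.drop j)
      (by intro u; cases u <;> rfl)
    simp only [pshift, bshift, Pt.sigma, Nat.add_sub_cancel]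
    rw [hm, mul_mul_mul_comm, ← pow_add]
    congr 2
    omega
  | C =>
    have := hmval fun h => by simpa using hp h
    have := hsplit (fun u => !(u == .AB || u == .AD)) (· == .AB) (w.take (j + 1))
      (by intro u; cases u <;> rfl)
    have := hsplit (fun u => !(u == .AD || u == .BD)) (· == .BD) (w.drop j)
      (by intro u; cases u <;> rfl)
    simp only [pshift, bshift, Pt.sigma, Nat.add_sub_cancel]
    rw [hm, mul_mul_mul_comm, ← pow_add, mul_comm C B]
    congr 2
    omega

theorem div_bshift_sigma_eq_pshift (hq : q ≠ 0) (hA : A ≠ 0) (hD : D ≠ 0) {w : List Letter}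
    (hm : A * D = B * C * q ^ mval w) (j : Fin w.length) {p : Pt}
    (hp : w.get j = .AD → p = .A ∨ p = .D) :
    A * D / bshift A B C D q w (j + 1) p.sigma = pshift A B C D q w (j + 1) p :=
  have h := pshift_mul_bshift_sigma hq hm j hp
  (eq_div_of_mul_eq (right_ne_zero_of_mul (h ▸ mul_ne_zero hA hD)) h).symm

end

theorem Letter.dual_p1 (L : Letter) : L.dual.p1 = L.p2.sigma := by cases L <;> rfl

theorem Letter.dual_p2 (L : Letter) : L.dual.p2 = L.p1.sigma := by cases L <;> rfl

theorem length_tauWord (w : List Letter) : (tauWord w).length = w.length := by simp [tauWord]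

theorem get_tauWord (w : List Letter) (j : Fin w.length) :
    (tauWord w).get (Fin.cast (length_tauWord w).symm j) = (w.get j.rev).dual := by
  simp only [List.get_eq_getElem, Fin.val_cast, Fin.val_rev]
  simp only [tauWord, List.getElem_reverse, List.getElem_map, List.length_map]
  congr 2
  omega

theorem take_tauWord (w : List Letter) (j : ℕ) :
    (tauWord w).take j = ((w.drop (w.length - j)).map Letter.dual).reverse := by
  simp [tauWord, List.take_reverse, List.map_drop]

theorem drop_tauWord (w : List Letter) (j : ℕ) :
    (tauWord w).drop j = ((w.take (w.length - j)).map Letter.dual).reverse := by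
  simp [tauWord, List.drop_reverse, List.map_take]

theorem pshift_tauWord {K : Type*} [Field K] (A B C D q : K) (w : List Letter) (j : ℕ) (x : Pt) :
    pshift A B C D q (tauWord w) (j + 1) x = bshift A B C D q w (w.length - j) x := by
  have hidx : w.length - (j + 1) = w.length - j - 1 := by omega
  cases x <;>
    simp only [pshift, bshift, take_tauWord, drop_tauWord, hidx, Nat.add_sub_cancel,
      List.countP_reverse, List.countP_map] <;>
    congr <;> funext u <;> cases u <;> rfl

section

variable {K : Type*} [Field K]

/-- `I_q(x; [u_1,v_1], …, [u_k,v_k]; y)` for `x = q^N y`: the chains `x ⊴ t_1 ⊴ ⋯ ⊴ t_k ⊴ y`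
are `t_j = x q^{-n_j}` with `0 ≤ n_1 ≤ ⋯ ≤ n_k ≤ N`. -/
noncomputable def qIntegral (x q : K) (N : ℕ) {k : ℕ} (u v : Fin k → K) : K :=
  ∑ n ∈ Finset.univ.filter (fun n : Fin k → Fin (N + 1) => ∀ i j : Fin k, i ≤ j → n i ≤ n j),
    ∏ j : Fin k,
      (x * q ^ (-((n j : ℕ) : ℤ)) / (x * q ^ (-((n j : ℕ) : ℤ)) - u j)
        - x * q ^ (-((n j : ℕ) : ℤ)) / (x * q ^ (-((n j : ℕ) : ℤ)) - v j))

theorem LqW_eq_qIntegral (A B C D q : K) (N : ℕ) (w : List Letter) :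
    LqW A B C D q N w = qIntegral A q N (fun j => pshift A B C D q w ((j : ℕ) + 1) (w.get j).p1)
      (fun j => pshift A B C D q w ((j : ℕ) + 1) (w.get j).p2) := rfl

theorem qIntegral_cast (x q : K) (N : ℕ) {k k' : ℕ} (h : k = k') (u v : Fin k' → K) :
    qIntegral x q N u v = qIntegral x q N (u ∘ Fin.cast h) (v ∘ Fin.cast h) := by
  subst h; rfl

theorem Finset.sum_monotone_comp_rev {M : Type*} [AddCommMonoid M] {k m : ℕ}
    (f : (Fin k → Fin m) → M) :
    ∑ n ∈ univ.filter (fun n : Fin k → Fin m => ∀ i j : Fin k, i ≤ j → n i ≤ n j),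
      f (Fin.rev ∘ n ∘ Fin.rev) =
    ∑ n ∈ univ.filter (fun n : Fin k → Fin m => ∀ i j : Fin k, i ≤ j → n i ≤ n j), f n := by
  have hinv (n : Fin k → Fin m) : Fin.rev ∘ (Fin.rev ∘ n ∘ Fin.rev) ∘ Fin.rev = n := by
    funext i; simp
  have hmono (n : Fin k → Fin m) (hn : ∀ i j : Fin k, i ≤ j → n i ≤ n j) (i j : Fin k)
      (hij : i ≤ j) : (Fin.rev ∘ n ∘ Fin.rev) i ≤ (Fin.rev ∘ n ∘ Fin.rev) j :=
    Fin.rev_le_rev.mpr (hn _ _ (Fin.rev_le_rev.mpr hij))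
  refine Finset.sum_nbij' (fun n => Fin.rev ∘ n ∘ Fin.rev) (fun n => Fin.rev ∘ n ∘ Fin.rev)
    ?_ ?_ (fun n _ => hinv n) (fun n _ => hinv n) (fun _ _ => rfl)
  all_goals
    intro n hn
    simp only [Finset.mem_filter, Finset.mem_univ, true_and] at hn ⊢
    exact hmono n hn

theorem div_sub_div_eq_of_mul_eq {P t t' u u' v v' : K} (hP : P ≠ 0) (ht : t' * t = P)
    (hu : u' * v = P) (hv : v' * u = P) (htu : t ≠ u) (htv : t ≠ v) :
    t' / (t' - u') - t' / (t' - v') = t / (t - u) - t / (t - v) := by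
  have ht0 : t ≠ 0 := right_ne_zero_of_mul (ht ▸ hP)
  have hu0 : u ≠ 0 := right_ne_zero_of_mul (hv ▸ hP)
  have hv0 : v ≠ 0 := right_ne_zero_of_mul (hu ▸ hP)
  rw [eq_div_of_mul_eq ht0 ht, eq_div_of_mul_eq hu0 hv, eq_div_of_mul_eq hv0 hu]
  have := sub_ne_zero.mpr htu
  have := sub_ne_zero.mpr htv
  have := sub_ne_zero.mpr htu.symm
  have := sub_ne_zero.mpr htv.symm
  field_simp
  ring

theorem mul_zpow_neg_rev_mul_mul_zpow_neg {x y q : K} {N : ℕ} (hq : q ≠ 0) (hxy : x = q ^ N * y)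
    (m : Fin (N + 1)) :
    x * q ^ (-((m.rev : ℕ) : ℤ)) * (x * q ^ (-((m : ℕ) : ℤ))) = x * y := by
  have hm : ((m.rev : ℕ) : ℤ) = N - m := by
    rw [Fin.val_rev]; have := m.isLt; omega
  rw [hm, mul_mul_mul_comm, ← zpow_add₀ hq, show -((N : ℤ) - m) + -m = -N by ring, zpow_neg,
    zpow_natCast, hxy]
  field_simp

theorem qIntegral_inversion {x y q : K} {N k : ℕ} (hq : q ≠ 0) (hy : y ≠ 0)
    (hxy : x = q ^ N * y) {u v u' v' : Fin k → K} (hu : ∀ j, u' j * v j.rev = x * y)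
    (hv : ∀ j, v' j * u j.rev = x * y)
    (hden : ∀ j, ∀ n : ℕ, n ≤ N → x * q ^ (-(n : ℤ)) ≠ u j ∧ x * q ^ (-(n : ℤ)) ≠ v j) :
    qIntegral x q N u v = qIntegral x q N u' v' := by
  have hx : x ≠ 0 := hxy ▸ mul_ne_zero (pow_ne_zero N hq) hy
  unfold qIntegral
  conv_rhs => rw [← Finset.sum_monotone_comp_rev]
  refine Finset.sum_congr rfl fun n _ => Fintype.prod_equiv Fin.revPerm _ _ fun j => ?_
  have hdenj := hden j (n j) (Nat.lt_succ_iff.mp (n j).isLt)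
  simp only [Function.comp_apply, Fin.revPerm_apply, Fin.rev_rev]
  refine (div_sub_div_eq_of_mul_eq (mul_ne_zero hx hy)
    (mul_zpow_neg_rev_mul_mul_zpow_neg hq hxy (n j)) ?_ ?_ hdenj.1 hdenj.2).symm
  · simpa using hu j.rev
  · simpa using hv j.rev

end

theorem LqW_duality_general {K : Type*} [Field K] (A B C D q : K) (N : ℕ)
    (w : List Letter)
    (hq0 : q ≠ 0)
    (hD : D ≠ 0)
    (hAD : A = q ^ N * D)
    (hm : A * D = B * C * q ^ (mval w))
    (hden : ∀ j : Fin w.length, ∀ n : ℕ, n ≤ N →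
      A * q ^ (-(n : ℤ)) ≠ pshift A B C D q w ((j : ℕ) + 1) (w.get j).p1 ∧
      A * q ^ (-(n : ℤ)) ≠ pshift A B C D q w ((j : ℕ) + 1) (w.get j).p2) :
    (∀ j : Fin w.length,
      A * D / bshift A B C D q w ((j : ℕ) + 1) (Pt.sigma (w.get j).p1)
          = pshift A B C D q w ((j : ℕ) + 1) (w.get j).p1 ∧
      A * D / bshift A B C D q w ((j : ℕ) + 1) (Pt.sigma (w.get j).p2)
          = pshift A B C D q w ((j : ℕ) + 1) (w.get j).p2) ∧
    LqW A B C D q N w = LqW A B C D q N (tauWord w) := by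
  have hA : A ≠ 0 := hAD ▸ mul_ne_zero (pow_ne_zero N hq0) hD
  have hp1 (L : Letter) : L = .AD → L.p1 = .A ∨ L.p1 = .D := by rintro rfl; simp [Letter.p1]
  have hp2 (L : Letter) : L = .AD → L.p2 = .A ∨ L.p2 = .D := by rintro rfl; simp [Letter.p2]
  refine ⟨fun j => ⟨div_bshift_sigma_eq_pshift hq0 hA hD hm j (hp1 _),
    div_bshift_sigma_eq_pshift hq0 hA hD hm j (hp2 _)⟩, ?_⟩
  have hrev (j : Fin w.length) : w.length - j = j.rev + 1 := by rw [Fin.val_rev]; omega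
  rw [LqW_eq_qIntegral, LqW_eq_qIntegral, qIntegral_cast A q N (length_tauWord w).symm]
  refine qIntegral_inversion hq0 hD hAD (fun j => ?_) (fun j => ?_) hden
  · simp only [Function.comp_apply, get_tauWord, Letter.dual_p1, Fin.val_cast, pshift_tauWord,
      hrev, mul_comm]
    exact pshift_mul_bshift_sigma hq0 hm j.rev (hp2 _)
  · simp only [Function.comp_apply, get_tauWord, Letter.dual_p2, Fin.val_cast, pshift_tauWord,
      hrev, mul_comm]
    exact pshift_mul_bshift_sigma hq0 hm j.rev (hp1 _)

/-- **Theorem 4.2 of the paper** (the case `AD = BC q^{m(w)}`): in a field where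
`A = q^N D` and `AD = BC q^{m(w)}`, the shifted parameters satisfy
`AD/τ(u_j)^{[j]} = u_j^{(j)}` and `AD/τ(v_j)^{[j]} = v_j^{(j)}` for all `j`, and
consequently `L_q(w) = L_q(τ(w))`. -/
theorem LqW_duality {K : Type*} [Field K] (A B C D q : K) (N : ℕ)
    (w : List Letter) (hadm : AdmissibleWord w)
    (hq0 : q ≠ 0) (hq : ∀ n : ℕ, 1 ≤ n → q ^ n ≠ 1)
    (hB : B ≠ 0) (hC : C ≠ 0) (hD : D ≠ 0)
    (hAD : A = q ^ N * D)
    (hm : A * D = B * C * q ^ (mval w))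
    (hden : ∀ j : Fin w.length, ∀ n : ℕ, n ≤ N →
      A * q ^ (-(n : ℤ)) ≠ pshift A B C D q w ((j : ℕ) + 1) (w.get j).p1 ∧
      A * q ^ (-(n : ℤ)) ≠ pshift A B C D q w ((j : ℕ) + 1) (w.get j).p2)
    (hden' : ∀ j : Fin (tauWord w).length, ∀ n : ℕ, n ≤ N →
      A * q ^ (-(n : ℤ)) ≠
        pshift A B C D q (tauWord w) ((j : ℕ) + 1) ((tauWord w).get j).p1 ∧
      A * q ^ (-(n : ℤ)) ≠
        pshift A B C D q (tauWord w) ((j : ℕ) + 1) ((tauWord w).get j).p2) :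
    (∀ j : Fin w.length,
      A * D / bshift A B C D q w ((j : ℕ) + 1) (Pt.sigma (w.get j).p1)
          = pshift A B C D q w ((j : ℕ) + 1) (w.get j).p1 ∧
      A * D / bshift A B C D q w ((j : ℕ) + 1) (Pt.sigma (w.get j).p2)
          = pshift A B C D q w ((j : ℕ) + 1) (w.get j).p2) ∧
    LqW A B C D q N w = LqW A B C D q N (tauWord w) :=
  LqW_duality_general A B C D q N w hq0 hD hAD hm hden
end
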